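/- arXiv:1001.4622 — 5 statements merged into one kernel-verified Lean document; each statement's English description precedes it below -/
import Mathlib

section
/- The functions I₁ = e^{f'} cos(g') + (1/2) ln(f² + g²) - e^{f'}(f' cos(g') - g' sin(g')) and I₂ = e^{f'} sin(g') + arctan(g/f) - e^{f'}(f' sin(g') + g' cos(g')) are first integrals of the system f f'' - g g'' = e^{-f'} cos(g'), f g'' + g f'' = -e^{-f'} sin(g'), i.e., dI₁/dx = 0 and dI₂/dx = 0 along every solution (f, g) of the system with f² + g² ≠ 0. -/
/-!
With `z = f + i g` and `w = z' = f' + i g'`, the system says `z z'' = e^{-w}`,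
i.e. `w' e^w = 1 / z`. Hence `I₁ + i I₂ = e^w (1 - w) + log z` (with `arctan (g / f)` a local
branch of `arg z`) has derivative `-w w' e^w + w / z = 0`.
-/

section

open Real

/-- The real and imaginary parts of `w' e^w = z̄ / |z|²`. -/
lemma exp_mul_rotation_eq_of_system {f g f' g' f'' g'' : ℝ} (hne : f ^ 2 + g ^ 2 ≠ 0)
    (h₁ : f * f'' - g * g'' = exp (-f') * cos g')
    (h₂ : f * g'' + g * f'' = -exp (-f') * sin g') :
    exp f' * (f'' * cos g' - g'' * sin g') = f / (f ^ 2 + g ^ 2) ∧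
      exp f' * (f'' * sin g' + g'' * cos g') = -g / (f ^ 2 + g ^ 2) := by
  have hexp : exp f' * exp (-f') = 1 := by rw [← exp_add, add_neg_cancel, exp_zero]
  have htrig := sin_sq_add_cos_sq g'
  constructor <;> rw [eq_div_iff hne]
  · linear_combination exp f' * (f * (cos g' * h₁ - sin g' * h₂ + exp (-f') * htrig)
      + g * (sin g' * h₁ + cos g' * h₂)) + f * hexp
  · linear_combination exp f' * (f * (sin g' * h₁ + cos g' * h₂)
      - g * (cos g' * h₁ - sin g' * h₂ + exp (-f') * htrig)) - g * hexp

variable {f g p q : ℝ → ℝ} {f' g' p' q' x : ℝ}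

lemma hasDerivAt_half_log_sq_add_sq (hf : HasDerivAt f f' x) (hg : HasDerivAt g g' x)
    (hne : f x ^ 2 + g x ^ 2 ≠ 0) :
    HasDerivAt (fun t => 1 / 2 * log (f t ^ 2 + g t ^ 2))
      ((f x * f' + g x * g') / (f x ^ 2 + g x ^ 2)) x := by
  refine ((((hf.pow 2).add (hg.pow 2)).log hne).const_mul (1 / 2)).congr_deriv ?_
  simp only [Pi.add_apply, Pi.pow_apply]
  field_simp
  ring

lemma hasDerivAt_arctan_div (hf : HasDerivAt f f' x) (hg : HasDerivAt g g' x) (hfx : f x ≠ 0) :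
    HasDerivAt (fun t => arctan (g t / f t))
      ((f x * g' - g x * f') / (f x ^ 2 + g x ^ 2)) x := by
  refine (hg.div hf hfx).arctan.congr_deriv ?_
  simp only [Pi.div_apply]
  field_simp

lemma hasDerivAt_exp_mul_cos_add_sub {L : ℝ → ℝ} {L' : ℝ} (hp : HasDerivAt p p' x)
    (hq : HasDerivAt q q' x) (hL : HasDerivAt L L' x) :
    HasDerivAt
      (fun t => exp (p t) * cos (q t) + L t - exp (p t) * (p t * cos (q t) - q t * sin (q t)))
      (L' - p x * (exp (p x) * (p' * cos (q x) - q' * sin (q x)))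
        + q x * (exp (p x) * (p' * sin (q x) + q' * cos (q x)))) x := by
  refine (((hp.exp.mul hq.cos).add hL).sub
    (hp.exp.mul ((hp.mul hq.cos).sub (hq.mul hq.sin)))).congr_deriv ?_
  simp only [Pi.sub_apply, Pi.mul_apply]
  ring

lemma hasDerivAt_exp_mul_sin_add_sub {L : ℝ → ℝ} {L' : ℝ} (hp : HasDerivAt p p' x)
    (hq : HasDerivAt q q' x) (hL : HasDerivAt L L' x) :
    HasDerivAt
      (fun t => exp (p t) * sin (q t) + L t - exp (p t) * (p t * sin (q t) + q t * cos (q t)))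
      (L' - p x * (exp (p x) * (p' * sin (q x) + q' * cos (q x)))
        - q x * (exp (p x) * (p' * cos (q x) - q' * sin (q x)))) x := by
  refine (((hp.exp.mul hq.sin).add hL).sub
    (hp.exp.mul ((hp.mul hq.sin).add (hq.mul hq.cos)))).congr_deriv ?_
  simp only [Pi.add_apply, Pi.mul_apply]
  ring

end

open Real in
theorem first_integrals_example1_general
    (I : Set ℝ) (f g f' g' f'' g'' : ℝ → ℝ)
    (hf : ∀ x, HasDerivAt f (f' x) x) (hf' : ∀ x, HasDerivAt f' (f'' x) x)
    (hg : ∀ x, HasDerivAt g (g' x) x) (hg' : ∀ x, HasDerivAt g' (g'' x) x)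
    (hne : ∀ x ∈ I, f x ^ 2 + g x ^ 2 ≠ 0) (hfne : ∀ x ∈ I, f x ≠ 0)
    (ode1 : ∀ x ∈ I, f x * f'' x - g x * g'' x = exp (-f' x) * cos (g' x))
    (ode2 : ∀ x ∈ I, f x * g'' x + g x * f'' x = -exp (-f' x) * sin (g' x)) :
    (∀ x ∈ I, deriv (fun t => exp (f' t) * cos (g' t) + (1/2) * Real.log (f t ^ 2 + g t ^ 2)
        - exp (f' t) * (f' t * cos (g' t) - g' t * sin (g' t))) x = 0) ∧
    (∀ x ∈ I, deriv (fun t => exp (f' t) * sin (g' t) + Real.arctan (g t / f t)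
        - exp (f' t) * (f' t * sin (g' t) + g' t * cos (g' t))) x = 0) := by
  refine ⟨fun x hx => ?_, fun x hx => ?_⟩ <;>
    obtain ⟨hre, him⟩ := exp_mul_rotation_eq_of_system (hne x hx) (ode1 x hx) (ode2 x hx)
  · rw [(hasDerivAt_exp_mul_cos_add_sub (hf' x) (hg' x)
      (hasDerivAt_half_log_sq_add_sq (hf x) (hg x) (hne x hx))).deriv, hre, him]
    ring
  · rw [(hasDerivAt_exp_mul_sin_add_sub (hf' x) (hg' x)
      (hasDerivAt_arctan_div (hf x) (hg x) (hfne x hx))).deriv, hre, him]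
    ring

open Real in
/-- First integrals of the system `f f'' - g g'' = e^{-f'} cos g'`,
`f g'' + g f'' = -e^{-f'} sin g'`. -/
theorem first_integrals_example1
    (I : Set ℝ) (hI : IsOpen I) (f g f' g' f'' g'' : ℝ → ℝ)
    (hf : ∀ x, HasDerivAt f (f' x) x) (hf' : ∀ x, HasDerivAt f' (f'' x) x)
    (hg : ∀ x, HasDerivAt g (g' x) x) (hg' : ∀ x, HasDerivAt g' (g'' x) x)
    (hne : ∀ x ∈ I, f x ^ 2 + g x ^ 2 ≠ 0) (hfne : ∀ x ∈ I, f x ≠ 0)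
    (ode1 : ∀ x ∈ I, f x * f'' x - g x * g'' x = exp (-f' x) * cos (g' x))
    (ode2 : ∀ x ∈ I, f x * g'' x + g x * f'' x = -exp (-f' x) * sin (g' x)) :
    (∀ x ∈ I, deriv (fun t => exp (f' t) * cos (g' t) + (1/2) * Real.log (f t ^ 2 + g t ^ 2)
        - exp (f' t) * (f' t * cos (g' t) - g' t * sin (g' t))) x = 0) ∧
    (∀ x ∈ I, deriv (fun t => exp (f' t) * sin (g' t) + Real.arctan (g t / f t)
        - exp (f' t) * (f' t * sin (g' t) + g' t * cos (g' t))) x = 0) :=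
  first_integrals_example1_general I f g f' g' f'' g'' hf hf' hg hg' hne hfne ode1 ode2
end

section
/- The functions I₁ = e^{f'} cos(g') + e^{f'}(f' cos g' - g' sin g') - x²/2 and I₂ = e^{f'} sin(g') + e^{f'}(f' sin g' + g' cos g') are first integrals of the system 2f'' + f' f'' - g' g'' = x e^{-f'} cos(g'), 2g'' + f' g'' + g' f'' = -x e^{-f'} sin(g'). -/
open Real in
/-- First integrals of the system `(2+f')f'' - g' g'' = x e^{-f'} cos g'`,
`(2+f')g'' + g' f'' = -x e^{-f'} sin g'`. -/
theorem first_integrals_example2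
    (f g f' g' f'' g'' : ℝ → ℝ)
    (hf : ∀ x, HasDerivAt f (f' x) x) (hf' : ∀ x, HasDerivAt f' (f'' x) x)
    (hg : ∀ x, HasDerivAt g (g' x) x) (hg' : ∀ x, HasDerivAt g' (g'' x) x)
    (ode1 : ∀ x, 2 * f'' x + f' x * f'' x - g' x * g'' x = x * exp (-f' x) * cos (g' x))
    (ode2 : ∀ x, 2 * g'' x + f' x * g'' x + g' x * f'' x = -x * exp (-f' x) * sin (g' x)) :
    (∀ x, deriv (fun t => exp (f' t) * cos (g' t)
        + exp (f' t) * (f' t * cos (g' t) - g' t * sin (g' t)) - t ^ 2 / 2) x = 0) ∧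
    (∀ x, deriv (fun t => exp (f' t) * sin (g' t)
        + exp (f' t) * (f' t * sin (g' t) + g' t * cos (g' t))) x = 0) := by
  have hee : ∀ x : ℝ, exp (f' x) * exp (-f' x) = 1 := by
    intro x; rw [← exp_add]; simp
  have e1 : ∀ x : ℝ, exp (f' x) * (2 * f'' x + f' x * f'' x - g' x * g'' x)
      = x * cos (g' x) := by
    intro x
    calc exp (f' x) * (2 * f'' x + f' x * f'' x - g' x * g'' x)
        = exp (f' x) * (x * exp (-f' x) * cos (g' x)) := by rw [ode1 x]
      _ = (exp (f' x) * exp (-f' x)) * (x * cos (g' x)) := by ring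
      _ = x * cos (g' x) := by rw [hee x]; ring
  have e2 : ∀ x : ℝ, exp (f' x) * (2 * g'' x + f' x * g'' x + g' x * f'' x)
      = -x * sin (g' x) := by
    intro x
    calc exp (f' x) * (2 * g'' x + f' x * g'' x + g' x * f'' x)
        = exp (f' x) * (-x * exp (-f' x) * sin (g' x)) := by rw [ode2 x]
      _ = (exp (f' x) * exp (-f' x)) * (-x * sin (g' x)) := by ring
      _ = -x * sin (g' x) := by rw [hee x]; ring
  constructor
  · intro x
    have hexp := (hf' x).exp
    have hcos := (hg' x).cos
    have hsin := (hg' x).sin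
    have hD : HasDerivAt (fun t => exp (f' t) * cos (g' t)
        + exp (f' t) * (f' t * cos (g' t) - g' t * sin (g' t)) - t ^ 2 / 2)
        ((exp (f' x) * f'' x * cos (g' x) + exp (f' x) * (-sin (g' x) * g'' x))
        + (exp (f' x) * f'' x * (f' x * cos (g' x) - g' x * sin (g' x))
          + exp (f' x) * ((f'' x * cos (g' x) + f' x * (-sin (g' x) * g'' x))
            - (g'' x * sin (g' x) + g' x * (cos (g' x) * g'' x))))
        - (2 : ℕ) * x ^ 1 / 2) x := by
      exact ((hexp.mul hcos).add (hexp.mul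
        (((hf' x).mul hcos).sub ((hg' x).mul hsin)))).sub
        ((hasDerivAt_pow 2 x).div_const 2)
    rw [hD.deriv]
    have hpyth := sin_sq_add_cos_sq (g' x)
    linear_combination cos (g' x) * e1 x - sin (g' x) * e2 x + x * hpyth
  · intro x
    have hexp := (hf' x).exp
    have hcos := (hg' x).cos
    have hsin := (hg' x).sin
    have hD : HasDerivAt (fun t => exp (f' t) * sin (g' t)
        + exp (f' t) * (f' t * sin (g' t) + g' t * cos (g' t)))
        ((exp (f' x) * f'' x * sin (g' x) + exp (f' x) * (cos (g' x) * g'' x))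
        + (exp (f' x) * f'' x * (f' x * sin (g' x) + g' x * cos (g' x))
          + exp (f' x) * ((f'' x * sin (g' x) + f' x * (cos (g' x) * g'' x))
            + (g'' x * cos (g' x) + g' x * (-sin (g' x) * g'' x))))) x := by
      exact (hexp.mul hsin).add (hexp.mul
        (((hf' x).mul hsin).add ((hg' x).mul hcos)))
    rw [hD.deriv]
    have hpyth := sin_sq_add_cos_sq (g' x)
    linear_combination sin (g' x) * e1 x + cos (g' x) * e2 x
end

section
/- The four functions I₁ = x - e^{f'} cos(g'), I₂ = e^{f'} sin(g'), I₃ = e^{f'}(f' cos g' - g' sin g' - cos g') - f, I₄ = e^{f'}(g' cos g' + f' sin g' - sin g') - g are first integrals of the system f'' = e^{-f'} cos(g'), g'' = -e^{-f'} sin(g'). -/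
open Real in
/-- Four first integrals of the system `f'' = e^{-f'} cos g'`, `g'' = -e^{-f'} sin g'`. -/
theorem first_integrals_example3
    (f g f' g' f'' g'' : ℝ → ℝ)
    (hf : ∀ x, HasDerivAt f (f' x) x) (hf' : ∀ x, HasDerivAt f' (f'' x) x)
    (hg : ∀ x, HasDerivAt g (g' x) x) (hg' : ∀ x, HasDerivAt g' (g'' x) x)
    (ode1 : ∀ x, f'' x = exp (-f' x) * cos (g' x))
    (ode2 : ∀ x, g'' x = -exp (-f' x) * sin (g' x)) :
    (∀ x, deriv (fun t => t - exp (f' t) * cos (g' t)) x = 0) ∧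
    (∀ x, deriv (fun t => exp (f' t) * sin (g' t)) x = 0) ∧
    (∀ x, deriv (fun t => exp (f' t) * (f' t * cos (g' t) - g' t * sin (g' t) - cos (g' t))
        - f t) x = 0) ∧
    (∀ x, deriv (fun t => exp (f' t) * (g' t * cos (g' t) + f' t * sin (g' t) - sin (g' t))
        - g t) x = 0) := by
  have key : ∀ x : ℝ, exp (f' x) * exp (-f' x) = 1 := by
    intro x; rw [← Real.exp_add]; simp
  refine ⟨fun x => ?_, fun x => ?_, fun x => ?_, fun x => ?_⟩
  · have h : HasDerivAt (fun t => t - exp (f' t) * cos (g' t))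
        (1 - (exp (f' x) * f'' x * cos (g' x) + exp (f' x) * (-sin (g' x) * g'' x))) x :=
      (hasDerivAt_id x).sub (((hf' x).exp).mul ((hg' x).cos))
    rw [h.deriv, ode1 x, ode2 x]
    have hsc := Real.sin_sq_add_cos_sq (g' x)
    linear_combination (-(sin (g' x) ^ 2 + cos (g' x) ^ 2)) * key x - hsc
  · have h : HasDerivAt (fun t => exp (f' t) * sin (g' t))
        (exp (f' x) * f'' x * sin (g' x) + exp (f' x) * (cos (g' x) * g'' x)) x :=
      ((hf' x).exp).mul ((hg' x).sin)
    rw [h.deriv, ode1 x, ode2 x]; ring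
  · have h : HasDerivAt (fun t => exp (f' t) * (f' t * cos (g' t) - g' t * sin (g' t) - cos (g' t)) - f t)
        (exp (f' x) * f'' x * (f' x * cos (g' x) - g' x * sin (g' x) - cos (g' x)) +
          exp (f' x) * ((f'' x * cos (g' x) + f' x * (-sin (g' x) * g'' x)) -
            (g'' x * sin (g' x) + g' x * (cos (g' x) * g'' x)) - (-sin (g' x) * g'' x)) - f' x) x :=
      (((hf' x).exp).mul ((((hf' x).mul ((hg' x).cos)).sub ((hg' x).mul ((hg' x).sin))).sub ((hg' x).cos))).sub (hf x)
    rw [h.deriv, ode1 x, ode2 x]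
    have hsc := Real.sin_sq_add_cos_sq (g' x)
    linear_combination (f' x * (sin (g' x) ^ 2 + cos (g' x) ^ 2)) * key x + f' x * hsc
  · have h : HasDerivAt (fun t => exp (f' t) * (g' t * cos (g' t) + f' t * sin (g' t) - sin (g' t)) - g t)
        (exp (f' x) * f'' x * (g' x * cos (g' x) + f' x * sin (g' x) - sin (g' x)) +
          exp (f' x) * ((g'' x * cos (g' x) + g' x * (-sin (g' x) * g'' x)) +
            (f'' x * sin (g' x) + f' x * (cos (g' x) * g'' x)) - (cos (g' x) * g'' x)) - g' x) x :=
      (((hf' x).exp).mul ((((hg' x).mul ((hg' x).cos)).add ((hf' x).mul ((hg' x).sin))).sub ((hg' x).sin))).sub (hg x)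
    rw [h.deriv, ode1 x, ode2 x]
    have hsc := Real.sin_sq_add_cos_sq (g' x)
    linear_combination (g' x * (sin (g' x) ^ 2 + cos (g' x) ^ 2)) * key x + g' x * hsc
end

section
/- The six vector fields X₁ = ∂_f, X₂ = ∂_g, X₃ = x∂ₓ + f∂_f + g∂_g, X₄ = g∂_f - f∂_g, X₅ = 2xf∂ₓ + (f² - g²)∂_f + 2fg∂_g, X₆ = 2xg∂ₓ + 2fg∂_f - (f² - g²)∂_g on ℝ³ satisfy [X₁,X₂] = [X₃,X₄] = [X₅,X₆] = 0, [X₁,X₃] = X₁, [X₁,X₄] = -X₂, [X₁,X₅] = 2X₃, [X₁,X₆] = 2X₄, [X₂,X₃] = X₂, [X₂,X₄] = X₁, [X₂,X₅] = -2X₄, [X₂,X₆] = 2X₃, [X₃,X₅] = X₅, [X₃,X₆] = X₆, [X₄,X₅] = X₆, [X₄,X₆] = -X₅; hence they span a 6-dimensional Lie algebra. -/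
/-- Lie bracket of vector fields on `ℝ³`, viewed as maps `ℝ³ → ℝ³`:
`[X,Y](v) = DY(v)·X(v) - DX(v)·Y(v)`. -/
noncomputable def lieBracketVF (X Y : (Fin 3 → ℝ) → (Fin 3 → ℝ)) :
    (Fin 3 → ℝ) → (Fin 3 → ℝ) :=
  fun v => fderiv ℝ Y v (X v) - fderiv ℝ X v (Y v)

section

variable {𝕜 E F : Type*} [NontriviallyNormedField 𝕜] [NormedAddCommGroup E]
  [NormedSpace 𝕜 E] [NormedAddCommGroup F] [NormedSpace 𝕜 F]

@[fun_prop]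
theorem DifferentiableAt.vecCons {n : ℕ} {φ : E → F} {φs : E → Fin n → F} {x : E}
    (h : DifferentiableAt 𝕜 φ x) (hs : DifferentiableAt 𝕜 φs x) :
    DifferentiableAt 𝕜 (fun x => Matrix.vecCons (φ x) (φs x)) x :=
  h.finCons hs

theorem fderiv_eval {ι : Type*} [Fintype ι] {F' : ι → Type*} [∀ i, NormedAddCommGroup (F' i)]
    [∀ i, NormedSpace 𝕜 (F' i)] (i : ι) (v : ∀ i, F' i) :
    fderiv 𝕜 (fun u : ∀ i, F' i => u i) v = ContinuousLinearMap.proj i :=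
  (hasFDerivAt_apply i v).fderiv

end

theorem lieBracketVF_apply {X Y : (Fin 3 → ℝ) → (Fin 3 → ℝ)} {v : Fin 3 → ℝ}
    (hX : DifferentiableAt ℝ X v) (hY : DifferentiableAt ℝ Y v) (i : Fin 3) :
    lieBracketVF X Y v i =
      fderiv ℝ (fun u => Y u i) v (X v) - fderiv ℝ (fun u => X u i) v (Y v) := by
  simp [lieBracketVF, fderiv_apply hX, fderiv_apply hY]

/-- Commutation relations of the six vector fields `X₁ = ∂_f`, `X₂ = ∂_g`,
`X₃ = x∂ₓ + f∂_f + g∂_g`, `X₄ = g∂_f - f∂_g`, `X₅ = 2xf∂ₓ + (f²-g²)∂_f + 2fg∂_g`,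
`X₆ = 2xg∂ₓ + 2fg∂_f - (f²-g²)∂_g` (coordinates `(x,f,g) = (v 0, v 1, v 2)`);
they span a 6-dimensional Lie algebra. -/
theorem commutators_case_N361 :
    let X1 : (Fin 3 → ℝ) → (Fin 3 → ℝ) := fun _ => ![0, 1, 0]
    let X2 : (Fin 3 → ℝ) → (Fin 3 → ℝ) := fun _ => ![0, 0, 1]
    let X3 : (Fin 3 → ℝ) → (Fin 3 → ℝ) := fun v => ![v 0, v 1, v 2]
    let X4 : (Fin 3 → ℝ) → (Fin 3 → ℝ) := fun v => ![0, v 2, -(v 1)]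
    let X5 : (Fin 3 → ℝ) → (Fin 3 → ℝ) :=
      fun v => ![2 * v 0 * v 1, v 1 ^ 2 - v 2 ^ 2, 2 * v 1 * v 2]
    let X6 : (Fin 3 → ℝ) → (Fin 3 → ℝ) :=
      fun v => ![2 * v 0 * v 2, 2 * v 1 * v 2, -(v 1 ^ 2 - v 2 ^ 2)]
    lieBracketVF X1 X2 = 0 ∧ lieBracketVF X3 X4 = 0 ∧ lieBracketVF X5 X6 = 0 ∧
    lieBracketVF X1 X3 = X1 ∧ lieBracketVF X1 X4 = -X2 ∧
    lieBracketVF X1 X5 = 2 • X3 ∧ lieBracketVF X1 X6 = 2 • X4 ∧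
    lieBracketVF X2 X3 = X2 ∧ lieBracketVF X2 X4 = X1 ∧
    lieBracketVF X2 X5 = -(2 • X4) ∧ lieBracketVF X2 X6 = 2 • X3 ∧
    lieBracketVF X3 X5 = X5 ∧ lieBracketVF X3 X6 = X6 ∧
    lieBracketVF X4 X5 = X6 ∧ lieBracketVF X4 X6 = -X5 ∧
    LinearIndependent ℝ ![X1, X2, X3, X4, X5, X6] := by
  dsimp only
  refine ⟨?_, ?_, ?_, ?_, ?_, ?_, ?_, ?_, ?_, ?_, ?_, ?_, ?_, ?_, ?_, ?independent⟩
  case independent =>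
    rw [Fintype.linearIndependent_iff]
    intro c hc
    have eval (p : Fin 3 → ℝ) (i : Fin 3) := congrFun (congrFun hc p) i
    have h₀ : c 0 = 0 := by simpa [Fin.sum_univ_six] using eval 0 1
    have h₁ : c 1 = 0 := by simpa [Fin.sum_univ_six] using eval 0 2
    have h₂ : c 2 = 0 := by simpa [Fin.sum_univ_six] using eval ![1, 0, 0] 0
    have h₃ : c 0 + c 2 + c 4 = 0 := by simpa [Fin.sum_univ_six] using eval ![0, 1, 0] 1
    have h₄ : c 1 - c 3 - c 5 = 0 := by
      simpa [Fin.sum_univ_six, sub_eq_add_neg] using eval ![0, 1, 0] 2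
    have h₅ : c 2 + 2 * c 5 = 0 := by
      simpa [Fin.sum_univ_six, mul_comm] using eval ![1, 0, 1] 0
    intro i
    fin_cases i <;> simp <;> linarith
  all_goals
    funext v i
    rw [lieBracketVF_apply (by fun_prop) (by fun_prop)]
    fin_cases i <;>
      simp (disch := fun_prop) [fderiv_fun_mul, fderiv_fun_sub, fderiv_fun_pow, fderiv_eval] <;>
      ring
end

section
/- The functions I₁ = 1/x + (f'² - g'²)/(2x(f'² + g'²)²) and I₂ = f' g'/(x (f'² + g'²)²) are first integrals of the system x f'' = -f'³ + 3 f' g'² - f'/2, x g'' = -3 f'² g' + g'³ - g'/2 on any interval where x ≠ 0 and f'² + g'² ≠ 0. -/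
/-!
With `z = f' + i g'` the system is the single complex equation `x z' = -z³ - z/2`, and
`I₁ - i I₂ = 1/x + 1/(2 x z²)`. Along solutions `(1/(x z²))' = -1/(x² z²) - 2 z'/(x z³) = 2/x²`,
which cancels against `(1/x)' = -1/x²`.
-/

open Complex

theorem HasDerivAt.complex_re {F : ℝ → ℂ} {F' : ℂ} {x : ℝ} (h : HasDerivAt F F' x) :
    HasDerivAt (fun t => (F t).re) F'.re x :=
  reCLM.hasFDerivAt.comp_hasDerivAt x h

theorem HasDerivAt.complex_im {F : ℝ → ℂ} {F' : ℂ} {x : ℝ} (h : HasDerivAt F F' x) :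
    HasDerivAt (fun t => (F t).im) F'.im x :=
  imCLM.hasFDerivAt.comp_hasDerivAt x h

theorem ofReal_mul_eq_neg_pow_three_sub_half {x u v u' v' : ℝ}
    (h₁ : x * u' = -u ^ 3 + 3 * u * v ^ 2 - u / 2) (h₂ : x * v' = -3 * u ^ 2 * v + v ^ 3 - v / 2) :
    (x : ℂ) * (u' + v' * I) = -(u + v * I) ^ 3 - (u + v * I) / 2 := by
  have h₁' : (x * u' : ℂ) = -u ^ 3 + 3 * u * v ^ 2 - u / 2 := by exact_mod_cast h₁
  have h₂' : (x * v' : ℂ) = -3 * u ^ 2 * v + v ^ 3 - v / 2 := by exact_mod_cast h₂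
  linear_combination h₁' + I * h₂' + (3 * u * v ^ 2 + v ^ 3 * I) * I_sq

theorem hasDerivAt_inv_add_inv_two_mul_sq_eq_zero {z : ℝ → ℂ} {w : ℂ} {x : ℝ}
    (hz : HasDerivAt z w x) (hx : x ≠ 0) (hzx : z x ≠ 0) (ode : x * w = -z x ^ 3 - z x / 2) :
    HasDerivAt (fun t : ℝ => (t : ℂ)⁻¹ + (2 * t * z t ^ 2)⁻¹) 0 x := by
  have hx' : (x : ℂ) ≠ 0 := ofReal_ne_zero.mpr hx
  have hofReal : HasDerivAt (fun t : ℝ => (t : ℂ)) 1 x := (hasDerivAt_id x).ofReal_comp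
  have hden : HasDerivAt (fun t : ℝ => 2 * (t : ℂ) * z t ^ 2)
      (2 * 1 * z x ^ 2 + 2 * x * (2 * z x ^ 1 * w)) x :=
    (hofReal.const_mul 2).mul (hz.pow 2)
  refine (hofReal.inv hx' |>.add (hden.inv (by simp [hx', hzx]))).congr_deriv ?_
  field_simp
  linear_combination (-2) * ode

theorem re_inv_two_mul_sq (t u v : ℝ) :
    ((2 * t * (u + v * I) ^ 2 : ℂ)⁻¹).re = (u ^ 2 - v ^ 2) / (2 * t * (u ^ 2 + v ^ 2) ^ 2) := by
  rcases eq_or_ne t 0 with rfl | ht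
  · simp
  rcases eq_or_ne (u ^ 2 + v ^ 2) 0 with huv | huv
  · rw [(normSq_eq_zero (z := u + v * I)).mp (by rwa [normSq_add_mul_I]), huv]
    simp
  have hre : (2 * t * (u + v * I) ^ 2 : ℂ).re = 2 * t * (u ^ 2 - v ^ 2) := by simp [sq]
  rw [inv_re, hre, map_mul, map_mul, map_pow, normSq_add_mul_I, normSq_ofNat, normSq_ofReal]
  field_simp

theorem im_inv_two_mul_sq (t u v : ℝ) :
    ((2 * t * (u + v * I) ^ 2 : ℂ)⁻¹).im = -(u * v / (t * (u ^ 2 + v ^ 2) ^ 2)) := by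
  rcases eq_or_ne t 0 with rfl | ht
  · simp
  rcases eq_or_ne (u ^ 2 + v ^ 2) 0 with huv | huv
  · rw [(normSq_eq_zero (z := u + v * I)).mp (by rwa [normSq_add_mul_I]), huv]
    simp
  have him : (2 * t * (u + v * I) ^ 2 : ℂ).im = 2 * t * (2 * (u * v)) := by
    simp [sq, ← two_mul, mul_comm v u]
  rw [inv_im, him, map_mul, map_mul, map_pow, normSq_add_mul_I, normSq_ofNat, normSq_ofReal]
  field_simp

theorem first_integrals_case_N361_general
    (I : Set ℝ) (h0 : (0:ℝ) ∉ I)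
    (f' g' f'' g'' : ℝ → ℝ)
    (hf' : ∀ x, HasDerivAt f' (f'' x) x)
    (hg' : ∀ x, HasDerivAt g' (g'' x) x)
    (hne : ∀ x ∈ I, f' x ^ 2 + g' x ^ 2 ≠ 0)
    (ode1 : ∀ x ∈ I, x * f'' x = -f' x ^ 3 + 3 * f' x * g' x ^ 2 - f' x / 2)
    (ode2 : ∀ x ∈ I, x * g'' x = -3 * f' x ^ 2 * g' x + g' x ^ 3 - g' x / 2) :
    (∀ x ∈ I, deriv (fun t => 1 / t
        + (f' t ^ 2 - g' t ^ 2) / (2 * t * (f' t ^ 2 + g' t ^ 2) ^ 2)) x = 0) ∧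
    (∀ x ∈ I, deriv (fun t => f' t * g' t / (t * (f' t ^ 2 + g' t ^ 2) ^ 2)) x = 0) := by
  set z : ℝ → ℂ := fun t => f' t + g' t * Complex.I
  have hconst : ∀ x ∈ I, HasDerivAt (fun t : ℝ => (t : ℂ)⁻¹ + (2 * t * z t ^ 2)⁻¹) 0 x := by
    intro x hx
    refine hasDerivAt_inv_add_inv_two_mul_sq_eq_zero
      ((hf' x).ofReal_comp.add ((hg' x).ofReal_comp.mul_const Complex.I))
      (ne_of_mem_of_not_mem hx h0) ?_ (ofReal_mul_eq_neg_pow_three_sub_half (ode1 x hx) (ode2 x hx))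
    rw [← normSq_pos, normSq_add_mul_I]
    exact (hne x hx).symm.lt_of_le (by positivity)
  constructor <;> intro x hx
  · have hre : (fun t => 1 / t + (f' t ^ 2 - g' t ^ 2) / (2 * t * (f' t ^ 2 + g' t ^ 2) ^ 2)) =
        fun t : ℝ => ((t : ℂ)⁻¹ + (2 * t * z t ^ 2)⁻¹).re := by
      funext t
      simp only [z]
      rw [add_re, ← ofReal_inv, ofReal_re, re_inv_two_mul_sq, one_div]
    rw [hre, (hconst x hx).complex_re.deriv, zero_re]
  · have him : (fun t => f' t * g' t / (t * (f' t ^ 2 + g' t ^ 2) ^ 2)) =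
        -fun t : ℝ => ((t : ℂ)⁻¹ + (2 * t * z t ^ 2)⁻¹).im := by
      funext t
      simp only [Pi.neg_apply, z]
      rw [add_im, ← ofReal_inv, ofReal_im, im_inv_two_mul_sq, zero_add, neg_neg]
    rw [him, deriv.neg, (hconst x hx).complex_im.deriv, zero_im, neg_zero]

/-- First integrals of the system `x f'' = -f'³ + 3f'g'² - f'/2`,
`x g'' = -3f'²g' + g'³ - g'/2` on an interval avoiding `x = 0`. -/
theorem first_integrals_case_N361
    (I : Set ℝ) (hI : IsOpen I) (h0 : (0:ℝ) ∉ I)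
    (f g f' g' f'' g'' : ℝ → ℝ)
    (hf : ∀ x, HasDerivAt f (f' x) x) (hf' : ∀ x, HasDerivAt f' (f'' x) x)
    (hg : ∀ x, HasDerivAt g (g' x) x) (hg' : ∀ x, HasDerivAt g' (g'' x) x)
    (hne : ∀ x ∈ I, f' x ^ 2 + g' x ^ 2 ≠ 0)
    (ode1 : ∀ x ∈ I, x * f'' x = -f' x ^ 3 + 3 * f' x * g' x ^ 2 - f' x / 2)
    (ode2 : ∀ x ∈ I, x * g'' x = -3 * f' x ^ 2 * g' x + g' x ^ 3 - g' x / 2) :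
    (∀ x ∈ I, deriv (fun t => 1 / t
        + (f' t ^ 2 - g' t ^ 2) / (2 * t * (f' t ^ 2 + g' t ^ 2) ^ 2)) x = 0) ∧
    (∀ x ∈ I, deriv (fun t => f' t * g' t / (t * (f' t ^ 2 + g' t ^ 2) ^ 2)) x = 0) :=
  first_integrals_case_N361_general I h0 f' g' f'' g'' hf' hg' hne ode1 ode2
end
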